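/- arXiv:2206.07946 — 2 statements merged into one kernel-verified Lean document; each statement's English description precedes it below -/
import Mathlib

section
/- Let a, b, c ∈ ℝ and define u(ρ, ζ) = log(aρ² + bρ + c) − 2 log(1 + (a/2)|ζ|²) on the open set where aρ² + bρ + c > 0 and 1 + (a/2)|ζ|² > 0. Then u satisfies the continuous Toda equation (∂²_x + ∂²_y) u = −2 ∂²_ρ (e^u), where ζ = x + iy. -/
/-!
With `Q ρ = aρ² + bρ + c` and `P = 1 + (a/2)(x² + y²)` we have `u = log Q - 2 log P`, so
`e^u = Q / P²` is quadratic in `ρ` and `-2 ∂²_ρ e^u = -4a / P²`. On the other side,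
`(log P)ₓₓ = (Pₓₓ P - Pₓ²) / P²` with `Pₓ = a x`, `Pₓₓ = a`, and adding the `y`-term gives
`(∂²ₓ + ∂²_y) log P = (2aP - a²(x² + y²)) / P² = 2a / P²`, since `a(x² + y²) = 2(P - 1)`.
-/

open Real Filter Topology

lemma hasDerivAt_deriv_log {f f' : ℝ → ℝ} {f'' x : ℝ}
    (hf : ∀ᶠ t in 𝓝 x, HasDerivAt f (f' t) t) (hf' : HasDerivAt f' f'' x) (hx : f x ≠ 0) :
    HasDerivAt (deriv fun t => log (f t)) ((f'' * f x - f' x ^ 2) / f x ^ 2) x := by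
  have hne : ∀ᶠ t in 𝓝 x, f t ≠ 0 := hf.self_of_nhds.continuousAt.eventually_ne hx
  have hderiv : deriv (fun t => log (f t)) =ᶠ[𝓝 x] fun t => f' t / f t := by
    filter_upwards [hf, hne] with t ht hft using (ht.log hft).deriv
  exact ((hf'.div hf.self_of_nhds hx).congr_of_eventuallyEq hderiv).congr_deriv (by ring)

lemma hasDerivAt_quadratic (α β γ t : ℝ) :
    HasDerivAt (fun s => α * s ^ 2 + β * s + γ) (2 * α * t + β) t :=
  ((((hasDerivAt_pow 2 t).const_mul α).add ((hasDerivAt_id' t).const_mul β)).add_const γ).congr_deriv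
    (by norm_num; ring)

lemma deriv_quadratic (α β γ : ℝ) :
    deriv (fun s => α * s ^ 2 + β * s + γ) = fun t => 2 * α * t + β :=
  funext fun t => (hasDerivAt_quadratic α β γ t).deriv

lemma hasDerivAt_affine (α β t : ℝ) : HasDerivAt (fun s => α * s + β) α t := by
  simpa using ((hasDerivAt_id' t).const_mul α).add_const β

lemma deriv_deriv_quadratic (α β γ t : ℝ) :
    deriv (deriv fun s => α * s ^ 2 + β * s + γ) t = 2 * α := by
  rw [deriv_quadratic]
  exact (hasDerivAt_affine (2 * α) β t).deriv

lemma deriv_deriv_log_quadratic {α β γ t : ℝ} (h : α * t ^ 2 + β * t + γ ≠ 0) :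
    deriv (deriv fun s => log (α * s ^ 2 + β * s + γ)) t =
      (2 * α * (α * t ^ 2 + β * t + γ) - (2 * α * t + β) ^ 2) / (α * t ^ 2 + β * t + γ) ^ 2 :=
  (hasDerivAt_deriv_log (f' := fun t => 2 * α * t + β)
    (Eventually.of_forall (hasDerivAt_quadratic α β γ)) (hasDerivAt_affine _ β t) h).deriv

lemma deriv_deriv_const_sub_mul (C k : ℝ) (g : ℝ → ℝ) (t : ℝ) :
    deriv (deriv fun s => C - k * g s) t = -(k * deriv (deriv g) t) := by
  have hderiv : deriv (fun s => C - k * g s) = fun s => -(k * deriv g s) := by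
    funext s
    rw [deriv_const_sub, deriv_const_mul_field]
  rw [hderiv, deriv.fun_neg, deriv_const_mul_field]

lemma exp_log_sub_two_mul_log {q p : ℝ} (hq : 0 < q) (hp : 0 < p) :
    exp (log q - 2 * log p) = q / p ^ 2 := by
  have hlog : 2 * log p = log (p ^ 2) := by rw [log_pow]; norm_num
  rw [hlog, exp_sub, exp_log hq, exp_log (by positivity)]

/-- The function `u(ρ,ζ) = log(aρ² + bρ + c) - 2 log(1 + (a/2)|ζ|²)` solves the continuous
Toda equation `(∂²ₓ + ∂²_y) u = -2 ∂²_ρ (e^u)` where both arguments of the logarithms are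
positive. -/
theorem stmt12 (a b c : ℝ) (u : ℝ → ℝ → ℝ → ℝ)
    (hu : ∀ ρ x y, u ρ x y =
      Real.log (a * ρ ^ 2 + b * ρ + c) - 2 * Real.log (1 + a / 2 * (x ^ 2 + y ^ 2))) :
    ∀ ρ x y, 0 < a * ρ ^ 2 + b * ρ + c → 0 < 1 + a / 2 * (x ^ 2 + y ^ 2) →
      deriv (deriv fun s => u ρ s y) x + deriv (deriv fun t => u ρ x t) y =
        -2 * deriv (deriv fun s => Real.exp (u s x y)) ρ := by
  intro ρ x y hQ hP
  set P := 1 + a / 2 * (x ^ 2 + y ^ 2)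
  have hux : (fun s => u ρ s y) = fun s =>
      log (a * ρ ^ 2 + b * ρ + c) - 2 * log (a / 2 * s ^ 2 + 0 * s + (1 + a / 2 * y ^ 2)) := by
    funext s; rw [hu]; ring_nf
  have huy : (fun t => u ρ x t) = fun t =>
      log (a * ρ ^ 2 + b * ρ + c) - 2 * log (a / 2 * t ^ 2 + 0 * t + (1 + a / 2 * x ^ 2)) := by
    funext t; rw [hu]; ring_nf
  have hPx : a / 2 * x ^ 2 + 0 * x + (1 + a / 2 * y ^ 2) = P := by ring
  have hPy : a / 2 * y ^ 2 + 0 * y + (1 + a / 2 * x ^ 2) = P := by ring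
  have hexp : (fun s => exp (u s x y)) =ᶠ[𝓝 ρ] fun s => (a * s ^ 2 + b * s + c) / P ^ 2 := by
    filter_upwards [(hasDerivAt_quadratic a b c ρ).continuousAt.eventually (eventually_gt_nhds hQ)]
      with s hs using by rw [hu, exp_log_sub_two_mul_log hs hP]
  have hderiv_exp : deriv (fun s => (a * s ^ 2 + b * s + c) / P ^ 2) =
      fun s => deriv (fun s => a * s ^ 2 + b * s + c) s / P ^ 2 :=
    funext fun _ => deriv_div_const _
  rw [hux, huy, hexp.deriv.deriv_eq, deriv_deriv_const_sub_mul, deriv_deriv_const_sub_mul,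
    deriv_deriv_log_quadratic (hPx ▸ hP.ne'), deriv_deriv_log_quadratic (hPy ▸ hP.ne'), hPx, hPy,
    hderiv_exp, deriv_div_const, deriv_deriv_quadratic]
  field_simp
  ring
end

section
/- Let a, b, c ∈ ℝ with b ≠ 0, c ≠ 0 and b² − 4ac ≠ 0, and suppose ρ* := −2c/b > 0 and a(ρ*)² + bρ* + c > 0. Then there exists ρ₀ > 0 in a neighborhood of ρ* with the half-open interval between ρ₀ and ρ* contained in {ρ > 0 : aρ² + bρ + c > 0 and (bρ + 2c)/(aρ² + bρ + c) ≥ 0}, and the improper integral ∫ from ρ₀ to ρ* of sqrt((bρ + 2c)/(aρ² + bρ + c)) · (1/ρ) dρ is finite. -/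
/-!
Near `ρ* = -2c/b` the quadratic `aρ² + bρ + c` stays positive, while `bρ + 2c = b (ρ - ρ*)`
vanishes at `ρ*`. Approaching `ρ*` from the side where it is nonnegative, the
integrand is the square root of a continuous nonnegative function divided by `ρ > 0`, hence
continuous on the closed interval up to `ρ*`, and so integrable there.
-/

open Filter Topology Set

theorem exists_mul_sub_pos_forall_uIcc {P : ℝ → Prop} {x₀ : ℝ} (h : ∀ᶠ z in 𝓝 x₀, P z)
    {b : ℝ} (hb : b ≠ 0) : ∃ y, 0 < b * (y - x₀) ∧ ∀ z ∈ uIcc y x₀, P z := by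
  obtain ⟨ε, hε, hball⟩ := Metric.eventually_nhds_iff.mp h
  have hb' : 0 < |b| := abs_pos.mpr hb
  -- stepping by a positive multiple of `b` itself puts `y` on the right side without a sign split
  refine ⟨x₀ + b * (ε / (2 * |b|)), ?_, fun z hz => hball ?_⟩
  · have : 0 < b * b * (ε / (2 * |b|)) := mul_pos (mul_self_pos.mpr hb) (by positivity)
    linarith
  · calc dist z x₀ ≤ dist (x₀ + b * (ε / (2 * |b|))) x₀ := Real.dist_right_le_of_mem_uIcc hz
      _ = ε / 2 := by
        rw [Real.dist_eq, add_sub_cancel_left, abs_mul, abs_of_pos (by positivity : 0 < ε / (2 * |b|))]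
        field_simp
      _ < ε := half_lt_self hε

theorem mul_sub_nonneg_of_mem_uIcc {b x₀ y z : ℝ} (hy : 0 < b * (y - x₀))
    (hz : z ∈ uIcc y x₀) : 0 ≤ b * (z - x₀) := by
  rcases mem_uIcc.mp hz with ⟨hyz, hzx⟩ | ⟨hxz, hzy⟩ <;> rcases le_or_gt 0 b with hb | hb <;>
    nlinarith

theorem stmt16_general (a b c : ℝ) (hb : b ≠ 0)
    (hρpos : 0 < -2 * c / b)
    (hq : 0 < a * (-2 * c / b) ^ 2 + b * (-2 * c / b) + c) :
    ∃ ρ₀ : ℝ, 0 < ρ₀ ∧ ρ₀ ≠ -2 * c / b ∧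
      (Set.uIcc ρ₀ (-2 * c / b) \ {-2 * c / b} ⊆
        {ρ | 0 < ρ ∧ 0 < a * ρ ^ 2 + b * ρ + c ∧
          0 ≤ (b * ρ + 2 * c) / (a * ρ ^ 2 + b * ρ + c)}) ∧
      MeasureTheory.IntegrableOn
        (fun ρ => Real.sqrt ((b * ρ + 2 * c) / (a * ρ ^ 2 + b * ρ + c)) / ρ)
        (Set.uIcc ρ₀ (-2 * c / b)) := by
  set ρs := -2 * c / b
  have hnear : ∀ᶠ ρ in 𝓝 ρs, 0 < ρ ∧ 0 < a * ρ ^ 2 + b * ρ + c :=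
    (eventually_gt_nhds hρpos).and
      ((by fun_prop : Continuous fun ρ : ℝ => a * ρ ^ 2 + b * ρ + c).continuousAt.eventually
        (eventually_gt_nhds hq))
  obtain ⟨ρ₀, hside, hsub⟩ := exists_mul_sub_pos_forall_uIcc hnear hb
  have hlin : ∀ ρ, b * ρ + 2 * c = b * (ρ - ρs) := fun ρ => by
    simp only [ρs]; field_simp; ring
  refine ⟨ρ₀, (hsub ρ₀ left_mem_uIcc).1, fun h => by simp [h] at hside, ?_, ?_⟩
  · rintro ρ ⟨hρ, -⟩
    refine ⟨(hsub ρ hρ).1, (hsub ρ hρ).2, div_nonneg ?_ (hsub ρ hρ).2.le⟩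
    rw [hlin]
    exact mul_sub_nonneg_of_mem_uIcc hside hρ
  · refine ContinuousOn.integrableOn_compact isCompact_uIcc ?_
    exact ((Continuous.continuousOn (by fun_prop)).div (by fun_prop)
      fun ρ hρ => (hsub ρ hρ).2.ne').sqrt.div continuousOn_id fun ρ hρ => (hsub ρ hρ).1.ne'

/-- The curvature singularity at `ρ* = -2c/b` lies at finite distance: there is `ρ₀ > 0` with
the half-open interval between `ρ₀` and `ρ*` contained in the allowed range, such that the
arclength integrand `√((bρ+2c)/(aρ²+bρ+c))/ρ` is integrable up to `ρ*`. -/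
theorem stmt16 (a b c : ℝ) (hb : b ≠ 0) (hc : c ≠ 0) (hdisc : b ^ 2 - 4 * a * c ≠ 0)
    (hρpos : 0 < -2 * c / b)
    (hq : 0 < a * (-2 * c / b) ^ 2 + b * (-2 * c / b) + c) :
    ∃ ρ₀ : ℝ, 0 < ρ₀ ∧ ρ₀ ≠ -2 * c / b ∧
      (Set.uIcc ρ₀ (-2 * c / b) \ {-2 * c / b} ⊆
        {ρ | 0 < ρ ∧ 0 < a * ρ ^ 2 + b * ρ + c ∧
          0 ≤ (b * ρ + 2 * c) / (a * ρ ^ 2 + b * ρ + c)}) ∧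
      MeasureTheory.IntegrableOn
        (fun ρ => Real.sqrt ((b * ρ + 2 * c) / (a * ρ ^ 2 + b * ρ + c)) / ρ)
        (Set.uIcc ρ₀ (-2 * c / b)) :=
  stmt16_general a b c hb hρpos hq
end
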